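/- arXiv:1903.09867 — 3 statements merged into one kernel-verified Lean document; each statement's English description precedes it below -/
import Mathlib

section
/- Consider the exchange economy with Ω = {a,b}, equiprobable prior μ, three players with information partitions 𝒫_1 = 𝒫_3 = {{a,b}}, 𝒫_2 = {{a},{b}}, consumption sets C_i = ℝ_+, constant endowments e_i ≡ 1, and utilities ψ_1(x,w) = x, ψ_3(x,w) = x, ψ_2(x, a) = x, ψ_2(x, b) = 1 − x. An allocation is a triple (x_1, x_2, x_3) of functions x_i : Ω → ℝ_+ with x_i measurable w.r.t. the σ-field generated by 𝒫_i and x_1 + x_2 + x_3 ≡ 3. Then the weak interim private core is empty: for every feasible allocation x there exist a coalition S ⊆ {1,2,3}, a state w_0 ∈ Ω, and a feasible allocation y for S (measurable for each member and satisfying ∑_{i∈S} y_i = ∑_{i∈S} e_i) such that E(ψ_i(y_i, ·) | ℱ_i)(w_0) > E(ψ_i(x_i, ·) | ℱ_i)(w_0) for all i ∈ S. -/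
/-- States: `true = a`, `false = b`.  Players `0, 1, 2` of `Fin 3` are players `1, 2, 3`.
`interimUtility i xi w` is the conditional expected utility `E(ψᵢ(xᵢ,·) | ℱᵢ)(w)` under the
equiprobable prior: players `0` and `2` have trivial information (`𝒫 = {{a,b}}`) and utility
`ψ(x,w) = x`, so their interim utility is the average `(xᵢ(a)+xᵢ(b))/2`; player `1` has full
information (`𝒫 = {{a},{b}}`) and utility `ψ₂(x,a) = x`, `ψ₂(x,b) = 1 - x`. -/
noncomputable def interimUtility (i : Fin 3) (xi : Bool → ℝ) (w : Bool) : ℝ :=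
  if i = 1 then (if w then xi true else 1 - xi false)
  else (xi true + xi false) / 2

/-- The weak interim private core of the three-player economy with `Ω = {a,b}`,
endowments `eᵢ ≡ 1`, is empty: every feasible allocation is blocked by some coalition `S`
at some state `w₀` via a feasible `S`-allocation `y` (each `yᵢ` measurable w.r.t. `ℱᵢ`,
i.e. constant for players `0` and `2`, with `∑_{i∈S} yᵢ = ∑_{i∈S} eᵢ = |S|`). -/
theorem weak_interim_private_core_empty :
    ∀ x : Fin 3 → Bool → ℝ,
      (∀ i, ∀ w, 0 ≤ x i w) →
      (∀ i : Fin 3, i ≠ 1 → x i true = x i false) →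
      (∀ w, ∑ i : Fin 3, x i w = 3) →
      ∃ S : Finset (Fin 3), S.Nonempty ∧ ∃ w₀ : Bool, ∃ y : Fin 3 → Bool → ℝ,
        (∀ i ∈ S, ∀ w, 0 ≤ y i w) ∧
        (∀ i ∈ S, i ≠ 1 → y i true = y i false) ∧
        (∀ w, ∑ i ∈ S, y i w = (S.card : ℝ)) ∧
        (∀ i ∈ S, interimUtility i (x i) w₀ < interimUtility i (y i) w₀) := by
  intro x hnn hconst hsum
  have h0 := hconst 0 (by decide)
  have h2 := hconst 2 (by decide)
  have hsa := hsum true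
  have hsb := hsum false
  rw [Fin.sum_univ_three] at hsa hsb
  rcases lt_or_ge (x 0 true) 1 with h | ha1
  · refine ⟨{0}, ⟨0, by simp⟩, true, fun _ _ => 1, ?_, ?_, ?_, ?_⟩
    · intro i _ w; norm_num
    · intro i _ _; rfl
    · intro w; simp
    · intro i hi
      simp only [Finset.mem_singleton] at hi
      subst hi
      simp only [interimUtility]
      norm_num
      linarith [h0]
  · rcases lt_or_ge (x 2 true) 1 with h | hb1
    · refine ⟨{2}, ⟨2, by simp⟩, true, fun _ _ => 1, ?_, ?_, ?_, ?_⟩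
      · intro i _ w; norm_num
      · intro i _ _; rfl
      · intro w; simp
      · intro i hi
        simp only [Finset.mem_singleton] at hi
        subst hi
        simp only [interimUtility, if_neg (by decide : ¬(2:Fin 3) = 1)]
        linarith [h2]
    · rcases lt_or_ge (x 1 true) 1 with h | ht1
      · refine ⟨{1}, ⟨1, by simp⟩, true, fun _ _ => 1, ?_, ?_, ?_, ?_⟩
        · intro i _ w; norm_num
        · intro i hi hne; simp at hi; exact absurd hi hne
        · intro w; simp
        · intro i hi
          simp only [Finset.mem_singleton] at hi
          subst hi
          simp only [interimUtility, if_pos rfl]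
          simpa using h
      · rcases lt_or_ge 1 (x 1 false) with h | ht2
        · refine ⟨{1}, ⟨1, by simp⟩, false, fun _ _ => 1, ?_, ?_, ?_, ?_⟩
          · intro i _ w; norm_num
          · intro i hi hne; simp at hi; exact absurd hi hne
          · intro w; simp
          · intro i hi
            simp only [Finset.mem_singleton] at hi
            subst hi
            simp only [interimUtility, if_pos rfl]
            norm_num
            linarith
        · -- now x 0 ≥ 1, x 2 ≥ 1, x 1 true ≥ 1, x 1 false ≤ 1; sums force all = 1
          have e0 : x 0 true = 1 := by linarith
          have e1f : x 1 false = 1 := by linarith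
          refine ⟨{0, 1}, ⟨0, by simp⟩, false,
            fun i _ => if i = 0 then 3/2 else 1/2, ?_, ?_, ?_, ?_⟩
          · intro i _ w; dsimp only; split <;> norm_num
          · intro i _ _; rfl
          · intro w; norm_num
          · intro i hi
            simp only [Finset.mem_insert, Finset.mem_singleton] at hi
            rcases hi with rfl | rfl
            · simp only [interimUtility]
              norm_num
              linarith [h0]
            · simp only [interimUtility, if_pos rfl]
              norm_num [e1f]
end

section
/- In the same three-player economy (Ω = {a,b}, equiprobable μ, 𝒫_1 = 𝒫_3 = {{a,b}}, 𝒫_2 = {{a},{b}}, e_i ≡ 1, ψ_1(x,w)=x, ψ_3(x,w)=x, ψ_2(x,a)=x, ψ_2(x,b)=1−x), the constant allocation x = (1, 1, 1) belongs to the interim core: there is no coalition S, no common-knowledge event F ∈ ⋀_{i∈S} ℱ_i with μ(F) > 0, and no feasible S-allocation y such that E(ψ_i(y_i,·)|ℱ_i)(w) > E(ψ_i(x_i,·)|ℱ_i)(w) for a.e. w ∈ F and all i ∈ S. -/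
/-- `F` belongs to the information σ-field `ℱᵢ` of player `i`: player `1` discerns every
event (`ℱ₂ = 2^Ω`), players `0` and `2` only the trivial events. -/
def memField (i : Fin 3) (F : Set Bool) : Prop :=
  i = 1 ∨ F = ∅ ∨ F = Set.univ

/-- The constant allocation `x = (1,1,1)` belongs to the interim core of the three-player
economy: no coalition `S` can block it on a common-knowledge event `F ∈ ⋀_{i∈S} ℱᵢ` of
positive measure via a feasible `S`-allocation `y`. -/
theorem one_one_one_mem_interim_core :
    ¬ ∃ (S : Finset (Fin 3)) (F : Set Bool) (y : Fin 3 → Bool → ℝ),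
      S.Nonempty ∧
      (∀ i ∈ S, memField i F) ∧
      F.Nonempty ∧
      (∀ i ∈ S, ∀ w, 0 ≤ y i w) ∧
      (∀ i ∈ S, i ≠ 1 → y i true = y i false) ∧
      (∀ w, ∑ i ∈ S, y i w = (S.card : ℝ)) ∧
      (∀ w ∈ F, ∀ i ∈ S,
        interimUtility i (fun _ => (1 : ℝ)) w < interimUtility i (y i) w) := by
  rintro ⟨S, F, y, hS, hField, ⟨w0, hw0⟩, hpos, hconst, hsum, hblock⟩
  by_cases h1 : (1 : Fin 3) ∈ S
  · by_cases h2 : ∃ j ∈ S, j ≠ 1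
    · obtain ⟨j, hj, hj1⟩ := h2
      have hF : F = Set.univ := by
        rcases hField j hj with h | h | h
        · exact absurd h hj1
        · subst h; exact absurd hw0 (by simp)
        · exact h
      have key : ∀ i ∈ S, 1 < y i true := by
        intro i hi
        have hb := hblock true (by simp [hF]) i hi
        by_cases hi1 : i = 1
        · subst hi1; simpa [interimUtility] using hb
        · have hc := hconst i hi hi1
          simp [interimUtility, hi1] at hb
          linarith
      have hsumT := hsum true
      have hlt : (S.card : ℝ) < ∑ i ∈ S, y i true := by
        calc (S.card : ℝ) = ∑ i ∈ S, (1:ℝ) := by simp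
        _ < _ := Finset.sum_lt_sum_of_nonempty hS key
      linarith
    · push_neg at h2
      have hS1 : S = {1} := Finset.eq_singleton_iff_unique_mem.mpr ⟨h1, fun x hx => h2 x hx⟩
      have hsum1 := hsum w0
      rw [hS1] at hsum1
      simp at hsum1
      have hb := hblock w0 hw0 1 h1
      cases w0 <;> simp [interimUtility, hsum1] at hb
  · have key : ∀ i ∈ S, 1 < y i w0 := by
      intro i hi
      have hi1 : i ≠ 1 := fun h => h1 (h ▸ hi)
      have hb := hblock w0 hw0 i hi
      have hc := hconst i hi hi1
      simp [interimUtility, hi1] at hb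
      cases w0 <;> simp_all
    have hsum0 := hsum w0
    have hlt : (S.card : ℝ) < ∑ i ∈ S, y i w0 := by
      calc (S.card : ℝ) = ∑ i ∈ S, (1:ℝ) := by simp
      _ < _ := Finset.sum_lt_sum_of_nonempty hS key
    linarith
end

section
/- Let (Ω, ℱ, μ) be a probability space, and let g_j : Y → ℝ, j ∈ J (J finite), be concave functions on a convex set Y = ∏_{j∈J} Y_j with each Y_j convex, where each g_j(y) depends only on y_j. Let 𝒮 be a balanced collection of subsets of J with weights δ_S, and for S ∈ 𝒮 let y^S ∈ Y with g_j(y^S) ≥ v_j for all j ∈ S. Define y by y_j = ∑_{S∋j} δ_S y^S_j. Then g_j(y) ≥ v_j for every j ∈ J. -/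
/-- If each `g j` is concave on the product of convex sets `Y`, depends only on the `j`-th
coordinate (no externalities), `𝒮` is a balanced collection with weights `δ`, and the
coalitional profiles satisfy `g j (y^S) ≥ v j` for all `j ∈ S ∈ 𝒮`, then the balanced
combination `y`, `y j = ∑_{S∋j} δ S • y^S j`, satisfies `g j y ≥ v j` for every `j`. -/
theorem balanced_combination_payoff {J : Type*} [Fintype J] [DecidableEq J]
    {V : J → Type*} [∀ j, AddCommGroup (V j)] [∀ j, Module ℝ (V j)]
    (Y : ∀ j, Set (V j)) (hYconv : ∀ j, Convex ℝ (Y j))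
    (g : J → (∀ j, V j) → ℝ)
    (hdep : ∀ j, ∀ y z : ∀ k, V k, y j = z j → g j y = g j z)
    (hconc : ∀ j, ConcaveOn ℝ {y : ∀ k, V k | ∀ k, y k ∈ Y k} (g j))
    (𝒮 : Finset (Finset J)) (δ : Finset J → ℝ)
    (hpos : ∀ S ∈ 𝒮, 0 < δ S)
    (hbal : ∀ j : J, ∑ S ∈ 𝒮.filter (fun S => j ∈ S), δ S = 1)
    (v : J → ℝ) (yS : Finset J → ∀ j, V j)
    (hySmem : ∀ S ∈ 𝒮, ∀ j, yS S j ∈ Y j)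
    (hySpay : ∀ S ∈ 𝒮, ∀ j ∈ S, v j ≤ g j (yS S))
    (y : ∀ j, V j)
    (hy : ∀ j, y j = ∑ S ∈ 𝒮.filter (fun S => j ∈ S), δ S • yS S j) :
    ∀ j, v j ≤ g j y := by
  -- each coordinate of y lies in Y
  have hyY : ∀ k, y k ∈ Y k := by
    intro k
    rw [hy k]
    exact (hYconv k).sum_mem
      (fun S hS => (hpos S (Finset.mem_filter.1 hS).1).le)
      (hbal k)
      (fun S hS => hySmem S (Finset.mem_filter.1 hS).1 k)
  intro j
  set T := 𝒮.filter (fun S => j ∈ S) with hT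
  -- modified points
  set z : Finset J → ∀ k, V k := fun S => Function.update y j (yS S j) with hz
  have hzmem : ∀ S ∈ T, z S ∈ {p : ∀ k, V k | ∀ k, p k ∈ Y k} := by
    intro S hS k
    rcases eq_or_ne k j with rfl | hk
    · simp only [hz, Function.update_self]
      exact hySmem S (Finset.mem_filter.1 hS).1 k
    · simp only [hz, Function.update_of_ne hk]
      exact hyY k
  have hsum : ∑ S ∈ T, δ S • z S = y := by
    funext k
    rw [Finset.sum_apply]
    rcases eq_or_ne k j with rfl | hk
    · simp only [hz, Pi.smul_apply, Function.update_self]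
      exact (hy k).symm
    · simp only [hz, Pi.smul_apply, Function.update_of_ne hk]
      rw [← Finset.sum_smul, hbal j, one_smul]
  have hjensen := (hconc j).le_map_sum
    (t := T) (w := δ) (p := z)
    (fun S hS => (hpos S (Finset.mem_filter.1 hS).1).le)
    (hbal j) hzmem
  rw [hsum] at hjensen
  refine le_trans ?_ hjensen
  calc v j = ∑ S ∈ T, δ S * v j := by rw [← Finset.sum_mul, hbal j, one_mul]
    _ ≤ ∑ S ∈ T, δ S • g j (z S) := by
        apply Finset.sum_le_sum
        intro S hS
        obtain ⟨hS𝒮, hjS⟩ := Finset.mem_filter.1 hS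
        have : g j (z S) = g j (yS S) := hdep j _ _ (by simp [hz])
        rw [this, smul_eq_mul]
        exact mul_le_mul_of_nonneg_left (hySpay S hS𝒮 j hjS) (hpos S hS𝒮).le
end
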